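/- The q-deformed binomial coefficients satisfy the skew Pascal-type recursion used in the inductive proof: φ(l|n) = p ∑_{m=0}^{l} φ(m|n-1) a_{n-l}^{n-m} + (1-p) φ(l|n-1) for l < n, and φ(n|n) = p ∑_{m=0}^{n-1} φ(m|n-1) a_0^{n-m}, where φ(m|n) = μ^m (ν/μ;q)_m (μ;q)_{n-m}(q;q)_n / ((ν;q)_n (q;q)_m (q;q)_{n-m}), a_k^l = (1-ν)(q-ν)ν^{l-k-1}q^{k-1}(q;q)_{l-1}(ν;q)_{k-1}/((q;q)_k(ν;q)_l) for k < l, a_l^l = (1-q^{l-1})/(1-νq^{l-1}), μ = p + ν(1-p). -/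

import Mathlib

/-- The q-Pochhammer symbol `(a;q)_n = ∏_{k=0}^{n-1} (1 - a q^k)` for `n : ℕ`. -/
noncomputable def qPoch (a q : ℂ) (n : ℕ) : ℂ := ∏ k ∈ Finset.range n, (1 - a * q ^ k)

/-- The q-Pochhammer symbol extended to integer index (`(a;q)_{-1} = (1-a/q)⁻¹`, etc.). -/
noncomputable def qPochZ (a q : ℂ) (n : ℤ) : ℂ :=
  if 0 ≤ n then qPoch a q n.toNat
  else ∏ k ∈ Finset.Icc 1 (-n).toNat, (1 - a * q ^ (-(k : ℤ)))⁻¹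

/-- The hopping weight
`φ(m|n) = μ^m (ν/μ;q)_m (μ;q)_{n-m} (q;q)_n / ((ν;q)_n (q;q)_m (q;q)_{n-m})`. -/
noncomputable def hopProb (q μ ν : ℂ) (m n : ℕ) : ℂ :=
  μ ^ m * qPoch (ν / μ) q m * qPoch μ q (n - m) * qPoch q q n /
    (qPoch ν q n * qPoch q q m * qPoch q q (n - m))

/-- The closed-form normal-ordering coefficients `a_k^l`. -/
noncomputable def aCoef (q ν : ℂ) (k l : ℕ) : ℂ :=
  if k = l then (1 - q ^ (l - 1)) / (1 - ν * q ^ (l - 1))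
  else (1 - ν) * (q - ν) * ν ^ (l - k - 1) * q ^ ((k : ℤ) - 1) *
    qPoch q q (l - 1) * qPochZ ν q ((k : ℤ) - 1) / (qPoch q q k * qPoch ν q l)

/-! Consecutive terms of `m ↦ φ(m|N)` and of `l ↦ a_k^l` have rational ratios, so the partial
sums `∑_{m ≤ j} φ(m|N) a_k^{N+1-m}` telescope: multiplied by `(μ - ν)(1 - ν q^N)` they collapse
to the single term `(μ - ν q^j)(1 - ν q^{N-j}) φ(j|N) a_k^{N+1-j}`. Since `μ - ν = p (1 - ν)`,
this reduces the recursion to a three-term q-Pascal identity for `φ` alone (`N = i + t + 1`),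
`(1-νq^N)(1-νq^t) φ(i+1|N+1) = (q-ν) q^t (μ-νq^i) φ(i|N) + (1-νq^N)(1-μq^t) φ(i+1|N)`,
which follows by expanding the q-Pochhammer symbols. -/

lemma qPoch_zero (a q : ℂ) : qPoch a q 0 = 1 := Finset.prod_range_zero _

lemma qPoch_succ (a q : ℂ) (n : ℕ) : qPoch a q (n + 1) = qPoch a q n * (1 - a * q ^ n) :=
  Finset.prod_range_succ _ _

lemma qPoch_self_succ (q : ℂ) (n : ℕ) : qPoch q q (n + 1) = qPoch q q n * (1 - q ^ (n + 1)) := by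
  rw [qPoch_succ, pow_succ']

lemma one_sub_mul_pow_ne_zero {a q : ℂ} (ha : ∀ k, qPoch a q k ≠ 0) (n : ℕ) :
    1 - a * q ^ n ≠ 0 :=
  right_ne_zero_of_mul (qPoch_succ a q n ▸ ha (n + 1))

lemma one_sub_pow_succ_ne_zero {q : ℂ} (hqq : ∀ k, qPoch q q k ≠ 0) (n : ℕ) :
    1 - q ^ (n + 1) ≠ 0 := by
  rw [pow_succ']
  exact one_sub_mul_pow_ne_zero hqq n

lemma pow_mul_qPoch_div_succ {μ : ℂ} (ν q : ℂ) (hμ : μ ≠ 0) (m : ℕ) :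
    μ ^ (m + 1) * qPoch (ν / μ) q (m + 1) = μ ^ m * qPoch (ν / μ) q m * (μ - ν * q ^ m) := by
  rw [qPoch_succ, pow_succ]
  field_simp

lemma qPochZ_natCast (a q : ℂ) (n : ℕ) : qPochZ a q n = qPoch a q n := by
  simp [qPochZ]

lemma qPochZ_neg_one (a q : ℂ) : qPochZ a q (-1) = (1 - a / q)⁻¹ := by
  simp [qPochZ, div_eq_mul_inv]

section aCoef

variable {q ν : ℂ}

lemma aCoef_zero_one (hq : q ≠ 0) (hνq : ν ≠ q) (hν : 1 - ν ≠ 0) : aCoef q ν 0 1 = 1 := by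
  have : q - ν ≠ 0 := sub_ne_zero.mpr hνq.symm
  rw [aCoef, if_neg zero_ne_one]
  simp only [Nat.cast_zero, zero_sub, qPochZ_neg_one, zpow_neg, zpow_one, tsub_zero, tsub_self,
    pow_zero, mul_one, qPoch_zero, qPoch_succ, one_mul]
  field_simp

lemma aCoef_succ_self (hν : ∀ k, qPoch ν q k ≠ 0) (k : ℕ) :
    aCoef q ν (k + 1) (k + 1) * (1 - ν * q ^ k) = 1 - q ^ k := by
  simp only [aCoef, Nat.add_sub_cancel]
  exact div_mul_cancel₀ _ (one_sub_mul_pow_ne_zero hν k)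

lemma aCoef_succ_succ (hqq : ∀ k, qPoch q q k ≠ 0) (hν : ∀ k, qPoch ν q k ≠ 0) (k : ℕ) :
    aCoef q ν (k + 1) (k + 2) * ((1 - ν * q ^ k) * (1 - ν * q ^ (k + 1)))
      = (1 - ν) * (q - ν) * q ^ k := by
  have := hqq (k + 1); have := hν k
  have := one_sub_mul_pow_ne_zero hν k; have := one_sub_mul_pow_ne_zero hν (k + 1)
  rw [aCoef, if_neg (by omega)]
  simp only [Nat.reduceSubDiff, add_tsub_cancel_left, tsub_self, pow_zero, mul_one, Nat.cast_add,
    Nat.cast_one, add_sub_cancel_right, zpow_natCast, Nat.add_one_sub_one, qPochZ_natCast,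
    qPoch_succ ν q (k + 1), qPoch_succ ν q k]
  field_simp

lemma aCoef_succ_right (hqq : ∀ k, qPoch q q k ≠ 0) (hν : ∀ k, qPoch ν q k ≠ 0) {k l : ℕ}
    (hkl : k < l) : aCoef q ν k (l + 1) * (1 - ν * q ^ l) = ν * (1 - q ^ l) * aCoef q ν k l := by
  obtain ⟨s, rfl⟩ : ∃ s, l = k + s + 1 := ⟨l - k - 1, by omega⟩
  have := hqq k; have := hν (k + s + 1); have := one_sub_mul_pow_ne_zero hν (k + s + 1)
  simp only [aCoef, show k ≠ k + s + 1 by omega, show k ≠ k + s + 1 + 1 by omega, if_false,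
    show k + s + 1 + 1 - k - 1 = s + 1 by omega, show k + s + 1 - k - 1 = s by omega,
    Nat.add_sub_cancel, qPoch_self_succ q (k + s), qPoch_succ ν q (k + s + 1)]
  field_simp
  ring

end aCoef

section hopProb

variable {q μ ν : ℂ}

lemma hopProb_zero_succ (hqq : ∀ k, qPoch q q k ≠ 0) (hν : ∀ k, qPoch ν q k ≠ 0) (N : ℕ) :
    (1 - ν * q ^ N) * hopProb q μ ν 0 (N + 1) = (1 - μ * q ^ N) * hopProb q μ ν 0 N := by
  have := hqq N; have := hν N; have := one_sub_pow_succ_ne_zero hqq N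
  have := one_sub_mul_pow_ne_zero hν N
  simp only [hopProb, Nat.sub_zero, pow_zero, qPoch_zero]
  rw [qPoch_self_succ q N, qPoch_succ ν q N, qPoch_succ μ q N]
  field_simp

lemma hopProb_succ_self (hμ : μ ≠ 0) (hqq : ∀ k, qPoch q q k ≠ 0) (hν : ∀ k, qPoch ν q k ≠ 0)
    (N : ℕ) :
    (1 - ν * q ^ N) * hopProb q μ ν (N + 1) (N + 1) = (μ - ν * q ^ N) * hopProb q μ ν N N := by
  have := hqq N; have := hν N; have := one_sub_pow_succ_ne_zero hqq N
  have := one_sub_mul_pow_ne_zero hν N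
  simp only [hopProb, Nat.sub_self, qPoch_zero]
  rw [pow_mul_qPoch_div_succ ν q hμ, qPoch_self_succ q N, qPoch_succ ν q N]
  field_simp

lemma hopProb_succ_left (hμ : μ ≠ 0) (hqq : ∀ k, qPoch q q k ≠ 0) (m s : ℕ) :
    hopProb q μ ν (m + 1) (m + s + 1) * ((1 - μ * q ^ s) * (1 - q ^ (m + 1)))
      = hopProb q μ ν m (m + s + 1) * ((μ - ν * q ^ m) * (1 - q ^ (s + 1))) := by
  have := hqq m; have := hqq s
  have := one_sub_pow_succ_ne_zero hqq m; have := one_sub_pow_succ_ne_zero hqq s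
  simp only [hopProb, show m + s + 1 - (m + 1) = s by omega, show m + s + 1 - m = s + 1 by omega]
  rw [pow_mul_qPoch_div_succ ν q hμ, qPoch_self_succ q m, qPoch_self_succ q s, qPoch_succ μ q s]
  field_simp

lemma hopProb_pascal (hμ : μ ≠ 0) (hqq : ∀ k, qPoch q q k ≠ 0) (hν : ∀ k, qPoch ν q k ≠ 0)
    (i t : ℕ) :
    (1 - ν * q ^ (i + t + 1)) * (1 - ν * q ^ t) * hopProb q μ ν (i + 1) (i + t + 2)
      = (q - ν) * q ^ t * (μ - ν * q ^ i) * hopProb q μ ν i (i + t + 1)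
        + (1 - ν * q ^ (i + t + 1)) * (1 - μ * q ^ t) * hopProb q μ ν (i + 1) (i + t + 1) := by
  have := hqq i; have := hqq t; have := hqq (i + t + 1); have := hν (i + t + 1)
  have := one_sub_pow_succ_ne_zero hqq i; have := one_sub_pow_succ_ne_zero hqq t
  have := one_sub_mul_pow_ne_zero hν (i + t + 1)
  simp only [hopProb, show i + t + 2 - (i + 1) = t + 1 by omega,
    show i + t + 1 - i = t + 1 by omega, show i + t + 1 - (i + 1) = t by omega]
  rw [pow_mul_qPoch_div_succ ν q hμ, qPoch_self_succ q i, qPoch_self_succ q t, qPoch_succ μ q t,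
    qPoch_self_succ q (i + t + 1), qPoch_succ ν q (i + t + 1)]
  field_simp
  ring

lemma sum_hopProb_mul_aCoef (hμ : μ ≠ 0) (hqq : ∀ k, qPoch q q k ≠ 0)
    (hν : ∀ k, qPoch ν q k ≠ 0) {j k N : ℕ} (h : j + k ≤ N) :
    (μ - ν) * (1 - ν * q ^ N) *
        ∑ m ∈ Finset.range (j + 1), hopProb q μ ν m N * aCoef q ν k (N + 1 - m)
      = (μ - ν * q ^ j) * (1 - ν * q ^ (N - j)) * hopProb q μ ν j N * aCoef q ν k (N + 1 - j) := by
  induction j with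
  | zero => simp [mul_assoc]
  | succ j ih =>
    obtain ⟨s, rfl⟩ : ∃ s, N = j + s + 1 := ⟨N - j - 1, by omega⟩
    have hA := aCoef_succ_right hqq hν (show k < s + 1 by omega)
    have hφ := hopProb_succ_left (ν := ν) hμ hqq j s
    rw [Finset.sum_range_succ, mul_add, ih (by omega)]
    simp only [show j + s + 1 + 1 - j = s + 2 by omega, show j + s + 1 - j = s + 1 by omega,
      show j + s + 1 + 1 - (j + 1) = s + 1 by omega, show j + s + 1 - (j + 1) = s by omega]
    linear_combination (μ - ν * q ^ j) * hopProb q μ ν j (j + s + 1) * hA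
      - ν * aCoef q ν k (s + 1) * hφ

end hopProb

/-- The skew Pascal-type recursion for the weights `φ(m|n)` with `μ = p + ν(1-p)`:
`φ(l|n) = p ∑_{m=0}^{l} φ(m|n-1) a_{n-l}^{n-m} + (1-p) φ(l|n-1)` for `l < n`, and
`φ(n|n) = p ∑_{m=0}^{n-1} φ(m|n-1) a_0^{n-m}`. -/
theorem hopProb_recursion (q ν p : ℂ) (hq0 : q ≠ 0) (hνq : ν ≠ q)
    (hμ : p + ν * (1 - p) ≠ 0)
    (hqq : ∀ k : ℕ, qPoch q q k ≠ 0) (hν : ∀ k : ℕ, qPoch ν q k ≠ 0)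
    (n : ℕ) (hn : 1 ≤ n) :
    (∀ l < n, hopProb q (p + ν * (1 - p)) ν l n
      = p * ∑ m ∈ Finset.range (l + 1),
          hopProb q (p + ν * (1 - p)) ν m (n - 1) * aCoef q ν (n - l) (n - m)
        + (1 - p) * hopProb q (p + ν * (1 - p)) ν l (n - 1))
    ∧ hopProb q (p + ν * (1 - p)) ν n n
      = p * ∑ m ∈ Finset.range n,
          hopProb q (p + ν * (1 - p)) ν m (n - 1) * aCoef q ν 0 (n - m) := by
  set μ := p + ν * (1 - p)
  obtain ⟨N, rfl⟩ : ∃ N, n = N + 1 := ⟨n - 1, by omega⟩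
  have h1ν : 1 - ν ≠ 0 := by simpa using one_sub_mul_pow_ne_zero hν 0
  have hNν := one_sub_mul_pow_ne_zero hν N
  simp only [Nat.add_sub_cancel]
  refine ⟨fun l hl => ?_, ?_⟩
  · rcases l with _ | i
    · refine mul_left_cancel₀ hNν ?_
      simp only [zero_add, Finset.sum_range_one, Nat.sub_zero]
      linear_combination hopProb_zero_succ (μ := μ) hqq hν N
        - p * hopProb q μ ν 0 N * aCoef_succ_self hν N
    · obtain ⟨t, rfl⟩ : ∃ t, N = i + t + 1 := ⟨N - i - 1, by omega⟩
      have hS := sum_hopProb_mul_aCoef hμ hqq hν (j := i) (k := t + 1) (N := i + t + 1) (by omega)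
      simp only [show i + t + 1 + 1 - i = t + 2 by omega, show i + t + 1 - i = t + 1 by omega] at hS
      refine mul_left_cancel₀ (mul_ne_zero (mul_ne_zero h1ν hNν) (one_sub_mul_pow_ne_zero hν t)) ?_
      rw [Finset.sum_range_succ, show i + t + 1 + 1 - (i + 1) = t + 1 by omega]
      linear_combination (1 - ν) * hopProb_pascal hμ hqq hν i t - (1 - ν * q ^ t) * hS
        - (μ - ν * q ^ i) * hopProb q μ ν i (i + t + 1) * aCoef_succ_succ hqq hν t
        - (1 - ν) * (1 - ν * q ^ (i + t + 1)) * p * hopProb q μ ν (i + 1) (i + t + 1)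
          * aCoef_succ_self hν t
  · have hS := sum_hopProb_mul_aCoef hμ hqq hν (j := N) (k := 0) (N := N) le_rfl
    simp only [Nat.sub_self, pow_zero, mul_one, show N + 1 - N = 1 by omega,
      aCoef_zero_one hq0 hνq h1ν] at hS
    refine mul_left_cancel₀ (mul_ne_zero h1ν hNν) ?_
    linear_combination (1 - ν) * hopProb_succ_self hμ hqq hν N - hS
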